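/- Let B = ⟨α, β, γ | α² central, β² central, α²β² = γ²⟩ and let p : B → B/⟨α², β²⟩ ≅ ℤ₂ ∗ ℤ₂ ∗ ℤ₂ be the quotient map. For every i ≥ 2, p restricts to an isomorphism Γ_i(B) ≅ Γ_i(ℤ₂ ∗ ℤ₂ ∗ ℤ₂). -/

import Mathlib

namespace Stmt13

open scoped commutatorElement

/-- Relators for `B = ⟨α, β, γ | α² central, β² central, α²β² = γ²⟩`,
with `α = of 0`, `β = of 1`, `γ = of 2`. -/
def Brels : Set (FreeGroup (Fin 3)) :=
  {⁅(FreeGroup.of (0 : Fin 3)) ^ 2, FreeGroup.of (1 : Fin 3)⁆,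
   ⁅(FreeGroup.of (0 : Fin 3)) ^ 2, FreeGroup.of (2 : Fin 3)⁆,
   ⁅(FreeGroup.of (1 : Fin 3)) ^ 2, FreeGroup.of (0 : Fin 3)⁆,
   ⁅(FreeGroup.of (1 : Fin 3)) ^ 2, FreeGroup.of (2 : Fin 3)⁆,
   (FreeGroup.of (0 : Fin 3)) ^ 2 * (FreeGroup.of (1 : Fin 3)) ^ 2 *
     ((FreeGroup.of (2 : Fin 3)) ^ 2)⁻¹}

/-- The group `B` (a presentation of `B₂(T²)`). -/
abbrev B := PresentedGroup Brels

/-- `ℤ₂ ∗ ℤ₂ ∗ ℤ₂`, presented on three generators each of order 2. -/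
abbrev W3 := PresentedGroup {r : FreeGroup (Fin 3) | ∃ i : Fin 3, r = (FreeGroup.of i) ^ 2}

def α : B := PresentedGroup.of (0 : Fin 3)
def β : B := PresentedGroup.of (1 : Fin 3)
def γ : B := PresentedGroup.of (2 : Fin 3)

/-- The kernel of the quotient map `p : B → B/⟨α², β²⟩ ≅ ℤ₂ ∗ ℤ₂ ∗ ℤ₂`. -/
abbrev N : Subgroup B := Subgroup.normalClosure ({α ^ 2, β ^ 2} : Set B)

/-! ### Auxiliary lemmas -/

/-- A surjective homomorphism maps the lower central series onto the lower central series. -/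
theorem lcs_map_eq {G H : Type*} [Group G] [Group H] (f : G →* H)
    (hf : Function.Surjective f) (n : ℕ) :
    Subgroup.map f ((⊤ : Subgroup G).lowerCentralSeries n) = (⊤ : Subgroup H).lowerCentralSeries n := by
  induction n with
  | zero => simpa using Subgroup.map_top_of_surjective f hf
  | succ n ih =>
    show Subgroup.map f ⁅(⊤ : Subgroup G).lowerCentralSeries n, ⊤⁆ = ⁅(⊤ : Subgroup H).lowerCentralSeries n, ⊤⁆
    rw [Subgroup.map_commutator, ih, Subgroup.map_top_of_surjective f hf]

lemma mk_rel_eq_one {r : FreeGroup (Fin 3)} (h : r ∈ Brels) :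
    PresentedGroup.mk Brels r = 1 :=
  (QuotientGroup.eq_one_iff r).mpr (Subgroup.subset_normalClosure h)

lemma comm_of (i j : Fin 3) (h : ⁅(FreeGroup.of i) ^ 2, FreeGroup.of j⁆ ∈ Brels) :
    Commute ((PresentedGroup.of (rels := Brels) i) ^ 2) (PresentedGroup.of j) := by
  have h1 := mk_rel_eq_one h
  rw [map_commutatorElement, map_pow] at h1
  exact commutatorElement_eq_one_iff_commute.mp h1

lemma ra2b : Commute (α ^ 2) β := comm_of 0 1 (Set.mem_insert _ _)
lemma ra2c : Commute (α ^ 2) γ :=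
  comm_of 0 2 (Set.mem_insert_of_mem _ (Set.mem_insert _ _))
lemma rb2a : Commute (β ^ 2) α :=
  comm_of 1 0 (Set.mem_insert_of_mem _ (Set.mem_insert_of_mem _ (Set.mem_insert _ _)))
lemma rb2c : Commute (β ^ 2) γ :=
  comm_of 1 2 (Set.mem_insert_of_mem _ (Set.mem_insert_of_mem _
    (Set.mem_insert_of_mem _ (Set.mem_insert _ _))))

lemma gamma_sq : γ ^ 2 = α ^ 2 * β ^ 2 := by
  have h1 := mk_rel_eq_one (r := (FreeGroup.of (0 : Fin 3)) ^ 2 * (FreeGroup.of (1 : Fin 3)) ^ 2 *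
      ((FreeGroup.of (2 : Fin 3)) ^ 2)⁻¹)
    (Set.mem_insert_of_mem _ (Set.mem_insert_of_mem _ (Set.mem_insert_of_mem _
      (Set.mem_insert_of_mem _ rfl))))
  rw [map_mul, map_mul, map_inv, map_pow, map_pow, map_pow, mul_inv_eq_one] at h1
  exact h1.symm

lemma a2_center : α ^ 2 ∈ Subgroup.center B ∧ β ^ 2 ∈ Subgroup.center B := by
  have hgen : ∀ g : B, g ∈ Subgroup.centralizer ({α ^ 2, β ^ 2} : Set B) := by
    intro g
    refine PresentedGroup.generated_by _ _ ?_ g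
    intro j
    rw [Subgroup.mem_centralizer_iff]
    rintro h (rfl | rfl)
    · fin_cases j
      · exact ((Commute.refl α).pow_left 2).eq
      · exact ra2b.eq
      · exact ra2c.eq
    · fin_cases j
      · exact rb2a.eq
      · exact ((Commute.refl β).pow_left 2).eq
      · exact rb2c.eq
  constructor <;>
  · rw [Subgroup.mem_center_iff]
    intro g
    have := hgen g
    rw [Subgroup.mem_centralizer_iff] at this
    first
      | exact (this _ (Set.mem_insert _ _)).symm
      | exact (this _ (Set.mem_insert_of_mem _ rfl)).symm

lemma N_eq_closure : N = Subgroup.closure ({α ^ 2, β ^ 2} : Set B) := by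
  have hcen : Subgroup.closure ({α ^ 2, β ^ 2} : Set B) ≤ Subgroup.center B := by
    rw [Subgroup.closure_le]
    rintro x (rfl | rfl)
    · exact a2_center.1
    · exact a2_center.2
  haveI : (Subgroup.closure ({α ^ 2, β ^ 2} : Set B)).Normal := by
    constructor
    intro n hn g
    have h1 : g * n = n * g := Subgroup.mem_center_iff.mp (hcen hn) g
    have h2 : g * n * g⁻¹ = n := by rw [h1, mul_assoc, mul_inv_cancel, mul_one]
    rw [h2]; exact hn
  exact le_antisymm (Subgroup.normalClosure_le_normal Subgroup.subset_closure)
    ((Subgroup.closure_le _).mpr Subgroup.subset_normalClosure)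

lemma comm_a2b2 : Commute (α ^ 2) (β ^ 2) :=
  ((Subgroup.mem_center_iff.mp a2_center.1) (β ^ 2)).symm

lemma mem_N_form {n : B} (hn : n ∈ N) :
    ∃ a b : ℤ, n = (α ^ 2) ^ a * (β ^ 2) ^ b := by
  rw [N_eq_closure] at hn
  induction hn using Subgroup.closure_induction with
  | mem x hx =>
    rcases hx with rfl | rfl
    · exact ⟨1, 0, by simp⟩
    · exact ⟨0, 1, by simp⟩
  | one => exact ⟨0, 0, by simp⟩
  | mul x y hx hy ihx ihy =>
    obtain ⟨a, b, rfl⟩ := ihx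
    obtain ⟨c, d, rfl⟩ := ihy
    refine ⟨a + c, b + d, ?_⟩
    have hcomm : (β ^ 2) ^ b * (α ^ 2) ^ c = (α ^ 2) ^ c * (β ^ 2) ^ b :=
      (comm_a2b2.symm.zpow_zpow b c).eq
    calc (α ^ 2) ^ a * (β ^ 2) ^ b * ((α ^ 2) ^ c * (β ^ 2) ^ d)
        = (α ^ 2) ^ a * ((β ^ 2) ^ b * (α ^ 2) ^ c) * (β ^ 2) ^ d := by group
      _ = (α ^ 2) ^ a * ((α ^ 2) ^ c * (β ^ 2) ^ b) * (β ^ 2) ^ d := by rw [hcomm]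
      _ = (α ^ 2) ^ (a + c) * (β ^ 2) ^ (b + d) := by rw [zpow_add, zpow_add]; group
  | inv x hx ihx =>
    obtain ⟨a, b, rfl⟩ := ihx
    refine ⟨-a, -b, ?_⟩
    have hcomm : (β ^ 2) ^ (-b) * (α ^ 2) ^ (-a) = (α ^ 2) ^ (-a) * (β ^ 2) ^ (-b) :=
      (comm_a2b2.symm.zpow_zpow (-b) (-a)).eq
    rw [mul_inv_rev, ← zpow_neg, ← zpow_neg, hcomm]

/-! ### The abelianization witness -/

def fmap : Fin 3 → Multiplicative (ℤ × ℤ) :=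
  fun i => Multiplicative.ofAdd (if i = 0 then (1, 0) else if i = 1 then (0, 1) else (1, 1))

lemma frel : ∀ r ∈ Brels, FreeGroup.lift fmap r = 1 := by
  intro r hr
  simp only [Brels, Set.mem_insert_iff, Set.mem_singleton_iff] at hr
  rcases hr with rfl | rfl | rfl | rfl | rfl
  · rw [map_commutatorElement]; exact commutatorElement_eq_one_iff_commute.mpr (mul_comm _ _)
  · rw [map_commutatorElement]; exact commutatorElement_eq_one_iff_commute.mpr (mul_comm _ _)
  · rw [map_commutatorElement]; exact commutatorElement_eq_one_iff_commute.mpr (mul_comm _ _)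
  · rw [map_commutatorElement]; exact commutatorElement_eq_one_iff_commute.mpr (mul_comm _ _)
  · simp only [map_mul, map_inv, map_pow, FreeGroup.lift_apply_of, fmap]
    decide

def fhom : B →* Multiplicative (ℤ × ℤ) := PresentedGroup.toGroup frel

lemma fhom_alpha : fhom α = Multiplicative.ofAdd ((1 : ℤ), (0 : ℤ)) :=
  (PresentedGroup.toGroup.of frel (x := (0 : Fin 3))).trans rfl

lemma fhom_beta : fhom β = Multiplicative.ofAdd ((0 : ℤ), (1 : ℤ)) :=
  (PresentedGroup.toGroup.of frel (x := (1 : Fin 3))).trans rfl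

lemma N_trivial_inter {n : B} (hn : n ∈ N) (h1 : fhom n = 1) : n = 1 := by
  obtain ⟨a, b, rfl⟩ := mem_N_form hn
  rw [map_mul, map_zpow, map_zpow, map_pow, map_pow, fhom_alpha, fhom_beta] at h1
  have h2 := congrArg Multiplicative.toAdd h1
  simp [Prod.ext_iff] at h2
  rw [h2.1, h2.2]
  simp

/-! ### The isomorphism `B ⧸ N ≃* W3` -/

lemma w3_sq (i : Fin 3) : (PresentedGroup.of i : W3) ^ 2 = 1 := by
  show (PresentedGroup.mk _ (FreeGroup.of i)) ^ 2 = 1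
  rw [← map_pow]
  exact (QuotientGroup.eq_one_iff _).mpr (Subgroup.subset_normalClosure ⟨i, rfl⟩)

lemma phi0_rel : ∀ r ∈ Brels,
    FreeGroup.lift (fun i => (PresentedGroup.of i : W3)) r = 1 := by
  intro r hr
  simp only [Brels, Set.mem_insert_iff, Set.mem_singleton_iff] at hr
  rcases hr with rfl | rfl | rfl | rfl | rfl <;>
    simp [map_commutatorElement, map_mul, map_inv, map_pow, FreeGroup.lift_apply_of, w3_sq,
      commutatorElement_def]

def phi0 : B →* W3 := PresentedGroup.toGroup phi0_rel

lemma phi0_ker : ∀ x ∈ N, phi0 x = 1 := by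
  have h : N ≤ phi0.ker := by
    refine Subgroup.normalClosure_le_normal ?_
    rintro x (rfl | rfl) <;>
    · simp only [SetLike.mem_coe, MonoidHom.mem_ker, map_pow]
      simpa [phi0, α, β, PresentedGroup.toGroup.of] using w3_sq _
  intro x hx
  exact h hx

def phi : B ⧸ N →* W3 := QuotientGroup.lift N phi0 phi0_ker

lemma of_sq_mem_N (i : Fin 3) : (PresentedGroup.of (rels := Brels) i) ^ 2 ∈ N := by
  fin_cases i
  · exact Subgroup.subset_normalClosure (Set.mem_insert _ _)
  · exact Subgroup.subset_normalClosure (Set.mem_insert_of_mem _ rfl)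
  · show γ ^ 2 ∈ N
    rw [gamma_sq]
    exact mul_mem (Subgroup.subset_normalClosure (Set.mem_insert _ _))
      (Subgroup.subset_normalClosure (Set.mem_insert_of_mem _ rfl))

lemma psi_rel : ∀ r ∈ {r : FreeGroup (Fin 3) | ∃ i : Fin 3, r = (FreeGroup.of i) ^ 2},
    FreeGroup.lift (fun i => QuotientGroup.mk' N (PresentedGroup.of i)) r = 1 := by
  rintro r ⟨i, rfl⟩
  rw [map_pow, FreeGroup.lift_apply_of, ← map_pow]
  exact (QuotientGroup.eq_one_iff _).mpr (of_sq_mem_N i)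

def psi : W3 →* B ⧸ N := PresentedGroup.toGroup psi_rel

lemma psi_phi : psi.comp phi = MonoidHom.id (B ⧸ N) := by
  apply QuotientGroup.monoidHom_ext
  apply PresentedGroup.ext
  intro x
  simp only [MonoidHom.comp_apply, MonoidHom.id_apply]
  show psi (phi (QuotientGroup.mk' N (PresentedGroup.of x))) = QuotientGroup.mk' N _
  rw [show phi (QuotientGroup.mk' N (PresentedGroup.of x)) = phi0 (PresentedGroup.of x) from rfl,
    show phi0 (PresentedGroup.of x) = PresentedGroup.of x from PresentedGroup.toGroup.of _,
    show psi (PresentedGroup.of x) = QuotientGroup.mk' N (PresentedGroup.of x) from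
      PresentedGroup.toGroup.of _]

lemma phi_psi : phi.comp psi = MonoidHom.id W3 := by
  apply PresentedGroup.ext
  intro x
  simp only [MonoidHom.comp_apply, MonoidHom.id_apply]
  rw [show psi (PresentedGroup.of x) = QuotientGroup.mk' N (PresentedGroup.of x) from
      PresentedGroup.toGroup.of _,
    show phi (QuotientGroup.mk' N (PresentedGroup.of x)) = phi0 (PresentedGroup.of x) from rfl]
  exact PresentedGroup.toGroup.of _

noncomputable def quotIso : B ⧸ N ≃* W3 := MonoidHom.toMulEquiv phi psi psi_phi phi_psi

/-! ### Main theorem -/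

/-- For every `i ≥ 2` (here `lowerCentralSeries _ j` is the paper's
`Γ_{j+1}`, so `j ≥ 1`), the projection `p` restricts to an isomorphism
`Γ_i(B) ≅ Γ_i(ℤ₂ ∗ ℤ₂ ∗ ℤ₂)`: it maps `Γ_i(B)` onto `Γ_i(B/⟨α²,β²⟩)`
injectively, and `Γ_i(B) ≅ Γ_i(ℤ₂ ∗ ℤ₂ ∗ ℤ₂)`. -/
theorem stmt_13 (i : ℕ) (hi : 1 ≤ i) :
    Subgroup.map (QuotientGroup.mk' N) ((⊤ : Subgroup B).lowerCentralSeries i) =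
      (⊤ : Subgroup (B ⧸ N)).lowerCentralSeries i ∧
    Set.InjOn (QuotientGroup.mk' N) ((⊤ : Subgroup B).lowerCentralSeries i : Set B) ∧
    Nonempty (((⊤ : Subgroup B).lowerCentralSeries i) ≃* ((⊤ : Subgroup W3).lowerCentralSeries i)) := by
  have part1 : Subgroup.map (QuotientGroup.mk' N) ((⊤ : Subgroup B).lowerCentralSeries i) =
      (⊤ : Subgroup (B ⧸ N)).lowerCentralSeries i :=
    lcs_map_eq (QuotientGroup.mk' N) (QuotientGroup.mk'_surjective N) i
  have part2 : Set.InjOn (QuotientGroup.mk' N) ((⊤ : Subgroup B).lowerCentralSeries i : Set B) := by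
    intro x hx y hy hxy
    have hmem : x * y⁻¹ ∈ N := by
      rw [← QuotientGroup.ker_mk' N, MonoidHom.mem_ker, map_mul, map_inv, hxy, mul_inv_cancel]
    have hx1 : x ∈ (⊤ : Subgroup B).lowerCentralSeries 1 := (⊤ : Subgroup B).lowerCentralSeries_antitone hi hx
    have hy1 : y ∈ (⊤ : Subgroup B).lowerCentralSeries 1 := (⊤ : Subgroup B).lowerCentralSeries_antitone hi hy
    have hcomm : x * y⁻¹ ∈ commutator B := by
      rw [← Subgroup.top_lowerCentralSeries_one]
      exact mul_mem hx1 (inv_mem hy1)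
    have hker : fhom (x * y⁻¹) = 1 := Abelianization.commutator_subset_ker fhom hcomm
    have := N_trivial_inter hmem hker
    rwa [mul_inv_eq_one] at this
  refine ⟨part1, part2, ?_⟩
  have e1 : ((⊤ : Subgroup B).lowerCentralSeries i) ≃*
      ((⊤ : Subgroup B).lowerCentralSeries i).map (QuotientGroup.mk' N) := by
    refine MulEquiv.ofBijective ((QuotientGroup.mk' N).subgroupMap _)
      ⟨?_, MonoidHom.subgroupMap_surjective _ _⟩
    intro a b hab
    exact Subtype.ext (part2 a.2 b.2 (congrArg Subtype.val hab))
  have e2 : (((⊤ : Subgroup B).lowerCentralSeries i).map (QuotientGroup.mk' N)) ≃*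
      (⊤ : Subgroup (B ⧸ N)).lowerCentralSeries i := MulEquiv.subgroupCongr part1
  have e3 : (⊤ : Subgroup (B ⧸ N)).lowerCentralSeries i ≃*
      ((⊤ : Subgroup (B ⧸ N)).lowerCentralSeries i).map quotIso.toMonoidHom :=
    Subgroup.equivMapOfInjective _ quotIso.toMonoidHom quotIso.injective
  have e4 : (((⊤ : Subgroup (B ⧸ N)).lowerCentralSeries i).map quotIso.toMonoidHom) ≃*
      (⊤ : Subgroup W3).lowerCentralSeries i :=
    MulEquiv.subgroupCongr (lcs_map_eq quotIso.toMonoidHom quotIso.surjective i)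
  exact ⟨((e1.trans e2).trans e3).trans e4⟩

end Stmt13
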